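/- For any u ∈ H¹(ℝᵈ) with u ≠ 0, there exists a unique λ(u) > 0 such that K(T_λ u) > 0 for 0 < λ < λ(u), K(T_{λ(u)} u) = 0, and K(T_λ u) < 0 for λ > λ(u). -/

import Mathlib

open MeasureTheory Filter Asymptotics Real Topology

noncomputable section

abbrev Ed (d : ℕ) : Type := EuclideanSpace ℝ (Fin d)

/-- squared L² norm -/
def l2sq (d : ℕ) (u : Ed d → ℝ) : ℝ := ∫ x : Ed d, (u x) ^ 2

/-- squared L² norm of the gradient -/
def gradsq (d : ℕ) (u : Ed d → ℝ) : ℝ := ∫ x : Ed d, ‖fderiv ℝ u x‖ ^ 2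

/-- ∫ |u|^q -/
def lpInt (d : ℕ) (q : ℝ) (u : Ed d → ℝ) : ℝ := ∫ x : Ed d, |u x| ^ q

/-- critical Sobolev exponent 2* = 2d/(d-2) -/
def twoStar (d : ℕ) : ℝ := 2 * (d : ℝ) / ((d : ℝ) - 2)

/-- membership in H¹(ℝᵈ) -/
def H1 (d : ℕ) (u : Ed d → ℝ) : Prop :=
  MemLp u 2 (volume : Measure (Ed d)) ∧ Differentiable ℝ u ∧
    MemLp (fun x => ‖fderiv ℝ u x‖) 2 (volume : Measure (Ed d))

/-- L²-scaling operator (T_λ u)(x) = λ^{d/2} u(λ x) -/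
def Tscal (d : ℕ) (lam : ℝ) (u : Ed d → ℝ) : Ed d → ℝ :=
  fun x => lam ^ ((d : ℝ) / 2) * u (lam • x)

/-- the action S_ω -/
def Sfun (d : ℕ) (ω μ p : ℝ) (u : Ed d → ℝ) : ℝ :=
  ω * l2sq d u + gradsq d u - (2 * μ / (p + 1)) * lpInt d (p + 1) u
    - (((d : ℝ) - 2) / (d : ℝ)) * lpInt d (twoStar d) u

/-- the functional K -/
def Kfun (d : ℕ) (μ p : ℝ) (u : Ed d → ℝ) : ℝ :=
  2 * gradsq d u - μ * ((d : ℝ) * (p - 1) / (p + 1)) * lpInt d (p + 1) u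
    - 2 * lpInt d (twoStar d) u

/-- the functional I_ω -/
def Ifun (d : ℕ) (ω p : ℝ) (u : Ed d → ℝ) : ℝ :=
  ω * l2sq d u + (((d : ℝ) * (p - 1) - 4) / ((d : ℝ) * (p - 1))) * gradsq d u
    + ((4 - ((d : ℝ) - 2) * (p - 1)) / ((d : ℝ) * (p - 1))) * lpInt d (twoStar d) u

/-- admissible class: nonzero H¹ functions (lying also in L^{p+1} and L^{2*}) -/
def adm (d : ℕ) (p : ℝ) (u : Ed d → ℝ) : Prop :=
  H1 d u ∧ ¬ (u =ᵐ[(volume : Measure (Ed d))] 0) ∧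
    MemLp u (ENNReal.ofReal (p + 1)) (volume : Measure (Ed d)) ∧
    MemLp u (ENNReal.ofReal (twoStar d)) (volume : Measure (Ed d))

/-- the variational value m_ω -/
def mOmega (d : ℕ) (ω μ p : ℝ) : ℝ :=
  sInf {y | ∃ u : Ed d → ℝ, adm d p u ∧ Kfun d μ p u = 0 ∧ y = Sfun d ω μ p u}

/-- the variational value m̃_ω -/
def mTilde (d : ℕ) (ω μ p : ℝ) : ℝ :=
  sInf {y | ∃ u : Ed d → ℝ, adm d p u ∧ Kfun d μ p u ≤ 0 ∧ y = Ifun d ω p u}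

/-- best Sobolev constant σ -/
def sobolev (d : ℕ) : ℝ :=
  sInf {y | ∃ u : Ed d → ℝ, Differentiable ℝ u ∧ lpInt d (twoStar d) u = 1 ∧ y = gradsq d u}

/-- Laplacian -/
def lap (d : ℕ) (u : Ed d → ℝ) (x : Ed d) : ℝ :=
  ∑ i : Fin d, fderiv ℝ (fun y => fderiv ℝ u y (EuclideanSpace.single i 1)) x
    (EuclideanSpace.single i 1)

/-! Under `T_λ` the three terms of `K` scale like `λ²`, `λ^{d(p-1)/2}` and `λ^{2*}`, so
`K(T_λ u) = λ² (a - b λ^e - c λ^s)` with `a, b > 0`, `c ≥ 0` and `e, s > 0`. The bracket is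
continuous and strictly decreasing on `[0, ∞)`, positive at `0` and tends to `-∞`, hence it has
exactly one zero, and `K(T_λ u)` changes sign exactly there. -/

open Set

def IsSignChange (f : ℝ → ℝ) (l : ℝ) : Prop :=
  0 < l ∧ f l = 0 ∧ (∀ x, 0 < x → x < l → 0 < f x) ∧ ∀ x, l < x → f x < 0

section IsSignChange

variable {f g : ℝ → ℝ} {l : ℝ}

theorem IsSignChange.congr (hf : IsSignChange f l) (h : EqOn f g (Ioi 0)) :
    IsSignChange g l := by
  obtain ⟨hl, h0, hpos, hneg⟩ := hf
  exact ⟨hl, h hl ▸ h0, fun x hx hxl => h hx ▸ hpos x hx hxl,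
    fun x hlx => h (hl.trans hlx) ▸ hneg x hlx⟩

theorem isSignChange_congr (h : EqOn f g (Ioi 0)) : IsSignChange f l ↔ IsSignChange g l :=
  ⟨(·.congr h), (·.congr h.symm)⟩

theorem isSignChange_mul_left_iff {w : ℝ → ℝ} (hw : ∀ x, 0 < x → 0 < w x) :
    IsSignChange (fun x => w x * f x) l ↔ IsSignChange f l := by
  refine ⟨fun ⟨hl, h0, hpos, hneg⟩ => ⟨hl, ?_, ?_, ?_⟩,
    fun ⟨hl, h0, hpos, hneg⟩ => ⟨hl, ?_, ?_, ?_⟩⟩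
  · exact (mul_eq_zero.1 h0).resolve_left (hw l hl).ne'
  · exact fun x hx hxl => pos_of_mul_pos_right (hpos x hx hxl) (hw x hx).le
  · exact fun x hlx => neg_of_mul_neg_right (hneg x hlx) (hw x (hl.trans hlx)).le
  · simp only [h0, mul_zero]
  · exact fun x hx hxl => mul_pos (hw x hx) (hpos x hx hxl)
  · exact fun x hlx => mul_neg_of_pos_of_neg (hw x (hl.trans hlx)) (hneg x hlx)

theorem StrictAntiOn.existsUnique_isSignChange (hcont : ContinuousOn f (Ici 0))
    (hanti : StrictAntiOn f (Ici 0)) (h0 : 0 < f 0) (htop : Tendsto f atTop atBot) :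
    ∃! l, IsSignChange f l := by
  obtain ⟨M, hM, hfM⟩ :=
    ((eventually_ge_atTop 0).and (htop.eventually (eventually_lt_atBot 0))).exists
  obtain ⟨l, ⟨hl0, hlM⟩, hfl⟩ :=
    intermediate_value_Icc' hM (hcont.mono Icc_subset_Ici_self) ⟨hfM.le, h0.le⟩
  have hl : 0 < l := hl0.lt_of_ne (by rintro rfl; exact h0.ne' hfl)
  refine ⟨l, ⟨hl, hfl, fun x hx hxl => ?_, fun x hlx => ?_⟩,
    fun l' ⟨hl', hfl', _⟩ => ?_⟩
  · exact hfl ▸ hanti hx.le hl.le hxl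
  · exact hfl ▸ hanti hl.le (hl.trans hlx).le hlx
  · exact hanti.injOn hl'.le hl.le (hfl'.trans hfl.symm)

end IsSignChange

theorem existsUnique_isSignChange_sub_rpow {a b c e s : ℝ} (ha : 0 < a) (hb : 0 < b)
    (hc : 0 ≤ c) (he : 0 < e) (hs : 0 < s) :
    ∃! l, IsSignChange (fun x => a - b * x ^ e - c * x ^ s) l := by
  refine StrictAntiOn.existsUnique_isSignChange ?_ ?_ ?_ ?_
  · exact ((continuousOn_const.sub (continuousOn_const.mul
      (continuousOn_id.rpow_const fun _ _ => Or.inr he.le))).sub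
      (continuousOn_const.mul (continuousOn_id.rpow_const fun _ _ => Or.inr hs.le)))
  · intro x hx y hy hxy
    have h1 := mul_lt_mul_of_pos_left (Real.rpow_lt_rpow hx hxy he) hb
    have h2 := mul_le_mul_of_nonneg_left (Real.rpow_le_rpow hx hxy.le hs.le) hc
    dsimp only
    linarith
  · simpa [Real.zero_rpow he.ne', Real.zero_rpow hs.ne'] using ha
  · have hlead : Tendsto (fun x : ℝ => a - b * x ^ e) atTop atBot :=
      tendsto_atBot_add_const_left _ a
        (tendsto_neg_atTop_atBot.comp ((tendsto_rpow_atTop he).const_mul_atTop hb))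
    refine tendsto_atBot_mono' _ ?_ hlead
    filter_upwards [eventually_ge_atTop 0] with x hx
    have := mul_nonneg hc (Real.rpow_nonneg hx s)
    linarith

theorem existsUnique_isSignChange_mul_sq_sub_rpow {a b c e s : ℝ} (ha : 0 < a) (hb : 0 < b)
    (hc : 0 ≤ c) (he : 2 < e) (hs : 2 < s) :
    ∃! l, IsSignChange (fun x => a * x ^ 2 - b * x ^ e - c * x ^ s) l := by
  have hfactor : EqOn (fun x => a * x ^ 2 - b * x ^ e - c * x ^ s)
      (fun x => x ^ 2 * (a - b * x ^ (e - 2) - c * x ^ (s - 2))) (Ioi 0) := by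
    intro x hx
    have hsplit : ∀ r : ℝ, x ^ r = x ^ 2 * x ^ (r - 2) := fun r => by
      rw [← Real.rpow_natCast, ← Real.rpow_add hx]; norm_num
    simp only [hsplit e, hsplit s]
    ring
  simp only [isSignChange_congr hfactor, isSignChange_mul_left_iff fun x hx => pow_pos hx 2]
  exact existsUnique_isSignChange_sub_rpow ha hb hc (by linarith) (by linarith)

theorem lpInt_Tscal (d : ℕ) (q : ℝ) {lam : ℝ} (hlam : 0 < lam) (u : Ed d → ℝ) :
    lpInt d q (Tscal d lam u) = lam ^ ((d : ℝ) * (q - 2) / 2) * lpInt d q u := by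
  have hpt : ∀ x, |Tscal d lam u x| ^ q = lam ^ ((d : ℝ) * q / 2) * |u (lam • x)| ^ q := by
    intro x
    rw [Tscal, abs_mul, abs_of_pos (Real.rpow_pos_of_pos hlam _),
      Real.mul_rpow (Real.rpow_nonneg hlam.le _) (abs_nonneg _), ← Real.rpow_mul hlam.le]
    ring_nf
  simp only [lpInt, hpt]
  rw [integral_const_mul,
    Measure.integral_comp_smul_of_nonneg volume (fun y => |u y| ^ q) lam (hR := hlam.le),
    finrank_euclideanSpace_fin, smul_eq_mul, ← mul_assoc, ← Real.rpow_natCast,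
    ← Real.rpow_neg hlam.le, ← Real.rpow_add hlam]
  ring_nf

theorem hasFDerivAt_Tscal (d : ℕ) (lam : ℝ) {u : Ed d → ℝ} {x : Ed d}
    (hu : DifferentiableAt ℝ u (lam • x)) :
    HasFDerivAt (Tscal d lam u) ((lam ^ ((d : ℝ) / 2) * lam) • fderiv ℝ u (lam • x)) x := by
  have h := (hu.hasFDerivAt.comp x ((hasFDerivAt_id x).const_smul lam)).const_mul
    (lam ^ ((d : ℝ) / 2))
  refine h.congr_fderiv ?_
  ext y
  simp [smul_smul, mul_comm]

theorem gradsq_Tscal (d : ℕ) {lam : ℝ} (hlam : 0 < lam) {u : Ed d → ℝ}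
    (hu : Differentiable ℝ u) :
    gradsq d (Tscal d lam u) = lam ^ 2 * gradsq d u := by
  have hpt : ∀ x, ‖fderiv ℝ (Tscal d lam u) x‖ ^ 2
      = lam ^ (d : ℝ) * lam ^ 2 * ‖fderiv ℝ u (lam • x)‖ ^ 2 := by
    intro x
    rw [(hasFDerivAt_Tscal d lam (hu _)).fderiv, norm_smul, Real.norm_eq_abs,
      abs_of_pos (mul_pos (Real.rpow_pos_of_pos hlam _) hlam), mul_pow, mul_pow,
      ← Real.rpow_natCast (lam ^ _), ← Real.rpow_mul hlam.le]
    norm_num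
  simp only [gradsq, hpt]
  rw [integral_const_mul,
    Measure.integral_comp_smul_of_nonneg volume (fun y => ‖fderiv ℝ u y‖ ^ 2) lam
      (hR := hlam.le),
    finrank_euclideanSpace_fin, smul_eq_mul, ← mul_assoc, ← Real.rpow_natCast lam d]
  field_simp

theorem lpInt_nonneg (d : ℕ) (q : ℝ) (u : Ed d → ℝ) : 0 ≤ lpInt d q u :=
  integral_nonneg fun _ => Real.rpow_nonneg (abs_nonneg _) q

theorem twoStar_sub_two {d : ℕ} (hd : (d : ℝ) ≠ 2) : twoStar d - 2 = 4 / (d - 2) := by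
  rw [twoStar]
  field_simp [sub_ne_zero.2 hd]
  ring

theorem two_lt_twoStar {d : ℕ} (hd : (2 : ℝ) < d) : 2 < twoStar d := by
  rw [← sub_pos, twoStar_sub_two hd.ne']
  exact div_pos four_pos (sub_pos.2 hd)

theorem Kfun_Tscal {d : ℕ} (hd : (d : ℝ) ≠ 2) (μ p : ℝ) {lam : ℝ} (hlam : 0 < lam)
    {u : Ed d → ℝ} (hu : Differentiable ℝ u) :
    Kfun d μ p (Tscal d lam u) = 2 * gradsq d u * lam ^ 2
      - μ * ((d : ℝ) * (p - 1) / (p + 1)) * lpInt d (p + 1) u * lam ^ ((d : ℝ) * (p - 1) / 2)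
      - 2 * lpInt d (twoStar d) u * lam ^ twoStar d := by
  have hsub : (d : ℝ) * (p + 1 - 2) / 2 = d * (p - 1) / 2 := by ring
  have hcrit : (d : ℝ) * (twoStar d - 2) / 2 = twoStar d := by
    rw [twoStar_sub_two hd, twoStar]
    field_simp [sub_ne_zero.2 hd]
    ring
  rw [Kfun, gradsq_Tscal d hlam hu, lpInt_Tscal d _ hlam, lpInt_Tscal d _ hlam, hsub, hcrit]
  ring

theorem stmt3_general (d : ℕ) (hd : 3 ≤ d) (μ p : ℝ) (hμ : 0 < μ)
    (hp1 : 1 + 4 / (d : ℝ) < p)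
    (u : Ed d → ℝ) (hu : H1 d u)
    (hg : 0 < gradsq d u) (hB : 0 < lpInt d (p + 1) u) :
    ∃! lam0 : ℝ, 0 < lam0 ∧ Kfun d μ p (Tscal d lam0 u) = 0 ∧
      (∀ lam, 0 < lam → lam < lam0 → 0 < Kfun d μ p (Tscal d lam u)) ∧
      (∀ lam, lam0 < lam → Kfun d μ p (Tscal d lam u) < 0) := by
  have hd2 : (2 : ℝ) < d := by exact_mod_cast hd
  have hp : 4 < (d : ℝ) * (p - 1) := by
    rw [← div_lt_iff₀' (by linarith)]
    linarith
  have hp_one : 1 < p := by nlinarith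
  have hK : EqOn (fun lam => Kfun d μ p (Tscal d lam u))
      (fun lam => 2 * gradsq d u * lam ^ 2
        - μ * ((d : ℝ) * (p - 1) / (p + 1)) * lpInt d (p + 1) u * lam ^ ((d : ℝ) * (p - 1) / 2)
        - 2 * lpInt d (twoStar d) u * lam ^ twoStar d) (Ioi 0) :=
    fun lam hlam => Kfun_Tscal hd2.ne' μ p hlam hu.2.1
  refine (existsUnique_congr fun l => isSignChange_congr hK).2 ?_
  refine existsUnique_isSignChange_mul_sq_sub_rpow (by positivity) ?_
    (mul_nonneg two_pos.le (lpInt_nonneg d _ u)) (by linarith) (two_lt_twoStar hd2)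
  exact mul_pos (mul_pos hμ (div_pos (by linarith) (by linarith))) hB

/-- existence of a unique zero λ(u) of λ ↦ K(T_λ u), positive before and
negative after. -/
theorem stmt3 (d : ℕ) (hd : 3 ≤ d) (μ p : ℝ) (hμ : 0 < μ)
    (hp1 : 1 + 4 / (d : ℝ) < p) (hp2 : p < twoStar d - 1)
    (u : Ed d → ℝ) (hu : H1 d u) (hune : ¬ (u =ᵐ[(volume : Measure (Ed d))] 0))
    (hg : 0 < gradsq d u) (hB : 0 < lpInt d (p + 1) u)
    (hC : 0 < lpInt d (twoStar d) u) :
    ∃! lam0 : ℝ, 0 < lam0 ∧ Kfun d μ p (Tscal d lam0 u) = 0 ∧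
      (∀ lam, 0 < lam → lam < lam0 → 0 < Kfun d μ p (Tscal d lam u)) ∧
      (∀ lam, lam0 < lam → Kfun d μ p (Tscal d lam u) < 0) :=
  stmt3_general d hd μ p hμ hp1 u hu hg hB
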